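/- arXiv:1712.03881 — 2 statements merged into one kernel-verified Lean document; each statement's English description precedes it below -/
import Mathlib

section
/- (Lower-index tail sum bound) Let ℓ ≥ 1 and i ≥ 1 be integers. The sum over integers 1 ≤ j < i with i − j > ℓ(10ℓ² + i^{2/3} + j^{2/3}) of (i^{2/3} + j^{2/3})/((i−j)²·j^{1/3}) is at most C·i^{1/3}/(ℓ(ℓ² + i^{2/3})) for a universal constant C. -/
/-!
Put `D = ℓ (ℓ² + i^{2/3})`. The cutoff forces `i - j > D`, and then each summand is at most
`4 / (i^{1/3} D j^{1/3}) + 4 i^{1/3} / (i - j)²`: according as `j ≤ i/2` or not, either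
`(i - j)² ≥ (i/2) D` or `j^{1/3} ≥ i^{1/3}/2`. Summing, `∑_{j<i} j^{-1/3} ≤ (3/2) i^{2/3}`
(telescoping via Bernoulli's inequality) and `∑_{k>D} k^{-2} ≤ 2/D` give `14 i^{1/3} / D`.
-/

open Finset

lemma rpow_sub_one_le_sub_rpow {q x : ℝ} (hq0 : 0 ≤ q) (hq1 : q ≤ 1) (hx : 1 ≤ x) :
    q * x ^ (q - 1) ≤ x ^ q - (x - 1) ^ q := by
  have hx0 : 0 < x := by linarith
  have hbern := rpow_one_add_le_one_add_mul_self (s := -x⁻¹)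
    (by linarith [inv_le_one_of_one_le₀ hx]) hq0 hq1
  have hfactor : x - 1 = x * (1 + -x⁻¹) := by field_simp; ring
  rw [hfactor, Real.mul_rpow hx0.le (by linarith [inv_le_one_of_one_le₀ hx]),
    Real.rpow_sub_one hx0.ne']
  have := mul_le_mul_of_nonneg_left hbern (Real.rpow_nonneg hx0.le q)
  field_simp at this ⊢
  linarith

lemma mul_sum_Icc_rpow_sub_one_le {q : ℝ} (hq0 : 0 ≤ q) (hq1 : q ≤ 1) (n : ℕ) :
    q * ∑ j ∈ Icc 1 n, (j : ℝ) ^ (q - 1) ≤ (n : ℝ) ^ q := by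
  induction n with
  | zero => simp [Real.rpow_nonneg]
  | succ n ih =>
    rw [sum_Icc_succ_top (by omega), mul_add]
    have := rpow_sub_one_le_sub_rpow hq0 hq1 (x := n + 1) (by linarith [n.cast_nonneg (α := ℝ)])
    push_cast
    rw [add_sub_cancel_right] at this
    linarith

lemma sum_filter_inv_sq_le (s : Finset ℕ) {D : ℝ} (hD : 0 < D) :
    ∑ k ∈ s with D < ((k : ℕ) : ℝ), ((k : ℝ) ^ 2)⁻¹ ≤ 2 / D := by
  calc ∑ k ∈ s with D < ((k : ℕ) : ℝ), ((k : ℝ) ^ 2)⁻¹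
      ≤ ∑ k ∈ Ioo ⌊D⌋₊ (s.sup id + 1), ((k : ℝ) ^ 2)⁻¹ := by
        refine sum_le_sum_of_subset_of_nonneg (fun k hk => ?_) (fun _ _ _ => by positivity)
        obtain ⟨hks, hDk⟩ := mem_filter.mp hk
        exact mem_Ioo.mpr
          ⟨(Nat.floor_lt hD.le).mpr hDk, Nat.lt_succ_of_le (le_sup (f := id) hks)⟩
    _ ≤ 2 / (⌊D⌋₊ + 1) := sum_Ioo_inv_sq_le _ _
    _ ≤ 2 / D := by gcongr; exact (Nat.lt_floor_add_one D).le

lemma cube_summand_le {a b D : ℝ} (hb : 0 < b) (hba : b ≤ a) (hD : 0 < D)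
    (hDab : D < a ^ 3 - b ^ 3) :
    (a ^ 2 + b ^ 2) / ((a ^ 3 - b ^ 3) ^ 2 * b) ≤
      4 / (a * D * b) + 4 * a / (a ^ 3 - b ^ 3) ^ 2 := by
  have ha : 0 < a := hb.trans_le hba
  have hgap : 0 < a ^ 3 - b ^ 3 := hD.trans hDab
  have hnum : a ^ 2 + b ^ 2 ≤ 2 * a ^ 2 := by nlinarith
  -- `a`, `b` stand for `i^{1/3}`, `j^{1/3}`; the split is `j ≤ i/2` versus `j > i/2`.
  rcases le_or_gt (2 * b ^ 3) (a ^ 3) with hsmall | hlarge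
  · have hden : a ^ 3 / 2 * D * b ≤ (a ^ 3 - b ^ 3) ^ 2 * b := by
      gcongr
      nlinarith
    calc (a ^ 2 + b ^ 2) / ((a ^ 3 - b ^ 3) ^ 2 * b)
        ≤ 2 * a ^ 2 / (a ^ 3 / 2 * D * b) := by gcongr
      _ = 4 / (a * D * b) := by field_simp; ring
      _ ≤ _ := le_add_of_nonneg_right (by positivity)
  · have hba2 : a / 2 ≤ b := by nlinarith [sq_nonneg (a - 2 * b), sq_nonneg b]
    calc (a ^ 2 + b ^ 2) / ((a ^ 3 - b ^ 3) ^ 2 * b)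
        ≤ 2 * a ^ 2 / ((a ^ 3 - b ^ 3) ^ 2 * (a / 2)) := by gcongr
      _ = 4 * a / (a ^ 3 - b ^ 3) ^ 2 := by field_simp; ring
      _ ≤ _ := le_add_of_nonneg_left (by positivity)

lemma rpow_two_thirds_eq_sq {x : ℝ} (hx : 0 ≤ x) : x ^ ((2 : ℝ) / 3) = (x ^ ((1 : ℝ) / 3)) ^ 2 := by
  rw [← Real.rpow_mul_natCast hx]; norm_num

lemma rpow_one_third_pow_three {x : ℝ} (hx : 0 ≤ x) : (x ^ ((1 : ℝ) / 3)) ^ 3 = x := by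
  rw [← Real.rpow_mul_natCast hx]; norm_num

lemma cutoff_summand_le {L x y : ℝ} (hL : 0 < L) (hy : 0 < y) (hyx : y ≤ x) :
    (if L * (10 * L ^ 2 + x ^ ((2 : ℝ) / 3) + y ^ ((2 : ℝ) / 3)) < x - y
      then (x ^ ((2 : ℝ) / 3) + y ^ ((2 : ℝ) / 3)) / ((x - y) ^ 2 * y ^ ((1 : ℝ) / 3)) else 0) ≤
      4 / (x ^ ((1 : ℝ) / 3) * (L * (L ^ 2 + x ^ ((2 : ℝ) / 3)))) * (y ^ ((1 : ℝ) / 3))⁻¹ +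
        4 * x ^ ((1 : ℝ) / 3) *
          (if L * (L ^ 2 + x ^ ((2 : ℝ) / 3)) < x - y then ((x - y) ^ 2)⁻¹ else 0) := by
  have hx : 0 < x := hy.trans_le hyx
  set D := L * (L ^ 2 + x ^ ((2 : ℝ) / 3))
  have hD : 0 < D := by positivity
  split_ifs with hcut hDxy hDxy
  · rw [rpow_two_thirds_eq_sq hx.le, rpow_two_thirds_eq_sq hy.le]
    have h := cube_summand_le (a := x ^ ((1 : ℝ) / 3)) (b := y ^ ((1 : ℝ) / 3)) (by positivity)
      (by gcongr) hD (by rwa [rpow_one_third_pow_three hx.le, rpow_one_third_pow_three hy.le])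
    rw [rpow_one_third_pow_three hx.le, rpow_one_third_pow_three hy.le] at h
    simpa only [div_eq_mul_inv, mul_inv, mul_assoc] using h
  · have hDle : D ≤ L * (10 * L ^ 2 + x ^ ((2 : ℝ) / 3) + y ^ ((2 : ℝ) / 3)) := by
      have : 0 ≤ y ^ ((2 : ℝ) / 3) := by positivity
      unfold D; gcongr L * ?_; nlinarith
    exact absurd (hDle.trans_lt hcut) hDxy
  all_goals positivity

lemma sum_Ico_inv_rpow_one_third_le (n : ℕ) :
    ∑ j ∈ Ico 1 n, ((j : ℝ) ^ ((1 : ℝ) / 3))⁻¹ ≤ 3 / 2 * (n : ℝ) ^ ((2 : ℝ) / 3) := by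
  have h := mul_sum_Icc_rpow_sub_one_le (q := 2 / 3) (by norm_num) (by norm_num) n
  have hq : (2 : ℝ) / 3 - 1 = -(1 / 3) := by norm_num
  simp only [hq, Real.rpow_neg (Nat.cast_nonneg _)] at h
  calc ∑ j ∈ Ico 1 n, ((j : ℝ) ^ ((1 : ℝ) / 3))⁻¹
      ≤ ∑ j ∈ Icc 1 n, ((j : ℝ) ^ ((1 : ℝ) / 3))⁻¹ :=
        sum_le_sum_of_subset_of_nonneg Ico_subset_Icc_self (fun _ _ _ => by positivity)
    _ ≤ 3 / 2 * (n : ℝ) ^ ((2 : ℝ) / 3) := by linarith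

/-- lower-index tail sum bound for the short-range cutoff (`j < i`). -/
theorem stmt4 : ∃ C : ℝ, 0 < C ∧ ∀ ℓ i : ℕ, 1 ≤ ℓ → 1 ≤ i →
    (∑ j ∈ Finset.Ico 1 i, if
        (ℓ : ℝ) * (10 * (ℓ : ℝ) ^ 2 + (i : ℝ) ^ ((2:ℝ)/3) + (j : ℝ) ^ ((2:ℝ)/3)) < (i : ℝ) - (j : ℝ)
      then ((i : ℝ) ^ ((2:ℝ)/3) + (j : ℝ) ^ ((2:ℝ)/3)) /
        (((i : ℝ) - (j : ℝ)) ^ 2 * (j : ℝ) ^ ((1:ℝ)/3)) else 0)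
    ≤ C * (i : ℝ) ^ ((1:ℝ)/3) / ((ℓ : ℝ) * ((ℓ : ℝ) ^ 2 + (i : ℝ) ^ ((2:ℝ)/3))) := by
  refine ⟨14, by norm_num, fun ℓ i hℓ hi => ?_⟩
  have hi' : (0 : ℝ) < i := by exact_mod_cast hi
  set D : ℝ := ℓ * (ℓ ^ 2 + (i : ℝ) ^ ((2 : ℝ) / 3))
  have hD : 0 < D := by positivity
  set g : ℕ → ℝ := fun k => if D < k then ((k : ℝ) ^ 2)⁻¹ else 0
  calc _ ≤ ∑ j ∈ Ico 1 i, (4 / ((i : ℝ) ^ ((1 : ℝ) / 3) * D) * ((j : ℝ) ^ ((1 : ℝ) / 3))⁻¹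
          + 4 * (i : ℝ) ^ ((1 : ℝ) / 3) * g (i - j)) := by
        refine sum_le_sum fun j hj => ?_
        obtain ⟨hj1, hji⟩ := mem_Ico.mp hj
        simpa only [g, Nat.cast_sub hji.le] using
          cutoff_summand_le (L := ℓ) (by positivity) (by positivity) (by exact_mod_cast hji.le)
    _ = 4 / ((i : ℝ) ^ ((1 : ℝ) / 3) * D) * ∑ j ∈ Ico 1 i, ((j : ℝ) ^ ((1 : ℝ) / 3))⁻¹
          + 4 * (i : ℝ) ^ ((1 : ℝ) / 3) *
            ∑ k ∈ Ico 1 i with D < ((k : ℕ) : ℝ), ((k : ℝ) ^ 2)⁻¹ := by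
        rw [sum_add_distrib, ← mul_sum, ← mul_sum, sum_Ico_reflect g 1 (by omega), sum_filter]
        simp [g]
    _ ≤ 4 / ((i : ℝ) ^ ((1 : ℝ) / 3) * D) * (3 / 2 * (i : ℝ) ^ ((2 : ℝ) / 3))
          + 4 * (i : ℝ) ^ ((1 : ℝ) / 3) * (2 / D) := by
        gcongr
        · exact sum_Ico_inv_rpow_one_third_le i
        · exact sum_filter_inv_sq_le _ hD
    _ = 14 * (i : ℝ) ^ ((1 : ℝ) / 3) / D := by
        rw [rpow_two_thirds_eq_sq hi'.le]; field_simp; ring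
end

section
/- (Comparison of edge locations of matching measures) Let μ₁, μ₂ be finite measures on ℝ and t > 0. Suppose a₁, a₂ ∈ ℝ satisfy 1 = t·∫ dμ₁(x)/(x − a₁)² and 1 = t·∫ dμ₂(x)/(x − a₂)², both measures give zero mass to a neighborhood of a₁ and a₂, and: (i) |∫ dμ₁(x)/(x − a₂)² − ∫ dμ₂(x)/(x − a₂)²| ≤ C/t₀ for some t₀ > 0; (ii) ∫ dμ₁(x)/((x−a₁)²(x−a₂)·1) + ∫ dμ₁(x)/((x−a₁)(x−a₂)²) ≥ c/t³ with both integrands positive (i.e. μ₁ is supported where x > max(a₁, a₂)). Then |a₁ − a₂| ≤ (C/c)·t³/t₀ = (C/c)·t²·(t/t₀). -/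
open MeasureTheory

/-- comparison of edge locations of matching measures:
`|a₁ − a₂| ≤ (C/c)·t³/t₀`. -/
theorem stmt14 (μ₁ μ₂ : Measure ℝ) [IsFiniteMeasure μ₁] [IsFiniteMeasure μ₂]
    (t t₀ c C : ℝ) (ht : 0 < t) (ht₀ : 0 < t₀) (hc : 0 < c) (hC : 0 < C)
    (a₁ a₂ : ℝ)
    (hsupp1 : ∀ᵐ x ∂μ₁, max a₁ a₂ < x)
    (hsupp2 : ∀ᵐ x ∂μ₂, max a₁ a₂ < x)
    (hi1 : Integrable (fun x => ((x - a₁) ^ 2)⁻¹) μ₁)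
    (hi2 : Integrable (fun x => ((x - a₂) ^ 2)⁻¹) μ₁)
    (hi2' : Integrable (fun x => ((x - a₂) ^ 2)⁻¹) μ₂)
    (hi3 : Integrable (fun x => ((x - a₁) ^ 2 * (x - a₂))⁻¹) μ₁)
    (hi4 : Integrable (fun x => ((x - a₁) * (x - a₂) ^ 2)⁻¹) μ₁)
    (he1 : 1 = t * ∫ x, ((x - a₁) ^ 2)⁻¹ ∂μ₁)
    (he2 : 1 = t * ∫ x, ((x - a₂) ^ 2)⁻¹ ∂μ₂)
    (hclose : |(∫ x, ((x - a₂) ^ 2)⁻¹ ∂μ₁) - ∫ x, ((x - a₂) ^ 2)⁻¹ ∂μ₂| ≤ C / t₀)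
    (hlow : c / t ^ 3 ≤
      (∫ x, ((x - a₁) ^ 2 * (x - a₂))⁻¹ ∂μ₁) + ∫ x, ((x - a₁) * (x - a₂) ^ 2)⁻¹ ∂μ₁) :
    |a₁ - a₂| ≤ (C / c) * t ^ 3 / t₀ := by
  set K : ℝ := (∫ x, ((x - a₁) ^ 2 * (x - a₂))⁻¹ ∂μ₁) +
      ∫ x, ((x - a₁) * (x - a₂) ^ 2)⁻¹ ∂μ₁ with hK
  -- pointwise identity a.e.
  have hpt : ∀ᵐ x ∂μ₁, ((x - a₁) ^ 2)⁻¹ - ((x - a₂) ^ 2)⁻¹ =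
      (a₁ - a₂) * (((x - a₁) ^ 2 * (x - a₂))⁻¹ + ((x - a₁) * (x - a₂) ^ 2)⁻¹) := by
    filter_upwards [hsupp1] with x hx
    have h1 : x - a₁ ≠ 0 := by
      have := lt_of_le_of_lt (le_max_left a₁ a₂) hx; linarith
    have h2 : x - a₂ ≠ 0 := by
      have := lt_of_le_of_lt (le_max_right a₁ a₂) hx; linarith
    field_simp
    ring
  have hdiff : (∫ x, ((x - a₁) ^ 2)⁻¹ ∂μ₁) - (∫ x, ((x - a₂) ^ 2)⁻¹ ∂μ₁)
      = (a₁ - a₂) * K := by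
    rw [← integral_sub hi1 hi2, integral_congr_ae hpt, integral_const_mul,
      integral_add hi3 hi4]
  -- both first integrals equal 1/t
  have heq : (∫ x, ((x - a₁) ^ 2)⁻¹ ∂μ₁) = ∫ x, ((x - a₂) ^ 2)⁻¹ ∂μ₂ := by
    have h1 : (∫ x, ((x - a₁) ^ 2)⁻¹ ∂μ₁) = 1 / t := by
      field_simp at he1 ⊢; linarith
    have h2 : (∫ x, ((x - a₂) ^ 2)⁻¹ ∂μ₂) = 1 / t := by
      field_simp at he2 ⊢; linarith
    rw [h1, h2]
  have habs : |a₁ - a₂| * K ≤ C / t₀ := by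
    have : |(a₁ - a₂) * K| ≤ C / t₀ := by
      rw [← hdiff, heq]
      rw [abs_sub_comm] at hclose
      exact hclose
    calc |a₁ - a₂| * K ≤ |a₁ - a₂| * |K| := by
          gcongr; exact le_abs_self K
      _ = |(a₁ - a₂) * K| := (abs_mul _ _).symm
      _ ≤ C / t₀ := this
  have hKpos : 0 < K := lt_of_lt_of_le (by positivity) hlow
  have h1 : |a₁ - a₂| * (c / t ^ 3) ≤ C / t₀ :=
    (mul_le_mul_of_nonneg_left hlow (abs_nonneg _)).trans habs
  have ht3 : (0:ℝ) < t ^ 3 := by positivity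
  rw [← mul_div_assoc, div_le_div_iff₀ ht3 ht₀] at h1
  rw [div_mul_eq_mul_div, div_div, le_div_iff₀ (by positivity : (0:ℝ) < c * t₀)]
  nlinarith [h1]
end
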